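/- arXiv:1208.0652 — 6 statements merged into one kernel-verified Lean document; each statement's English description precedes it below -/
import Mathlib

section
/- The part 𝕊 of the Cayley cubic traced out by ℱ is invariant under the Fibonacci trace map and consists entirely of points with bounded forward orbit: for all θ, φ ∈ ℝ and every n ∈ ℕ, Tⁿ(ℱ(θ,φ)) lies in [−1,1]³; in particular every point of the image of ℱ has bounded forward orbit under T. -/
/-- The Fibonacci trace map. -/
noncomputable def traceMap : ℝ × ℝ × ℝ → ℝ × ℝ × ℝ :=
  fun p => (2 * p.1 * p.2.1 - p.2.2, p.1, p.2.1)

/-- The semiconjugacy ℱ. -/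
noncomputable def semiConj : ℝ × ℝ → ℝ × ℝ × ℝ :=
  fun q => (Real.cos (2 * Real.pi * (q.1 + q.2)),
            Real.cos (2 * Real.pi * q.1),
            Real.cos (2 * Real.pi * q.2))

/-! `ℱ` semiconjugates the linear Fibonacci map `(θ, φ) ↦ (θ + φ, θ)` of the torus to the trace
map, by the product formula `2 cos a cos b = cos (a + b) + cos (a - b)`. Hence every forward
orbit of `T` starting on the image of `ℱ` stays on that image, whose coordinates are cosines. -/

def fibonacciShift : ℝ × ℝ → ℝ × ℝ :=
  fun q => (q.1 + q.2, q.1)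

theorem Real.two_mul_cos_mul_cos_sub_cos_sub (a b : ℝ) :
    2 * Real.cos a * Real.cos b - Real.cos (a - b) = Real.cos (a + b) := by
  rw [Real.cos_add, Real.cos_sub]
  ring

theorem semiConj_semiconj : Function.Semiconj semiConj fibonacciShift traceMap := by
  rintro ⟨θ, φ⟩
  have hsum := Real.two_mul_cos_mul_cos_sub_cos_sub (2 * Real.pi * (θ + φ)) (2 * Real.pi * θ)
  simp only [semiConj, fibonacciShift, traceMap, Prod.mk.injEq, and_true]
  convert hsum.symm using 2 <;> congr 1 <;> ring

theorem abs_semiConj_le_one (q : ℝ × ℝ) :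
    |(semiConj q).1| ≤ 1 ∧ |(semiConj q).2.1| ≤ 1 ∧ |(semiConj q).2.2| ≤ 1 :=
  ⟨Real.abs_cos_le_one _, Real.abs_cos_le_one _, Real.abs_cos_le_one _⟩

theorem isBounded_of_forall_abs_le {s : Set (ℝ × ℝ × ℝ)} {C : ℝ}
    (hs : ∀ p ∈ s, |p.1| ≤ C ∧ |p.2.1| ≤ C ∧ |p.2.2| ≤ C) : Bornology.IsBounded s := by
  refine isBounded_iff_forall_norm_le.2 ⟨C, fun p hp => ?_⟩
  obtain ⟨h₁, h₂, h₃⟩ := hs p hp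
  simpa only [Prod.norm_def, Real.norm_eq_abs, max_le_iff] using ⟨h₁, h₂, h₃⟩

theorem image_of_semiConj_bounded_orbits :
    (∀ θ φ : ℝ, ∀ n : ℕ,
      |(traceMap^[n] (semiConj (θ, φ))).1| ≤ 1 ∧
      |(traceMap^[n] (semiConj (θ, φ))).2.1| ≤ 1 ∧
      |(traceMap^[n] (semiConj (θ, φ))).2.2| ≤ 1) ∧
    (∀ θ φ : ℝ,
      Bornology.IsBounded (Set.range fun n : ℕ => traceMap^[n] (semiConj (θ, φ)))) := by
  have orbit_le_one : ∀ θ φ : ℝ, ∀ n : ℕ,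
      |(traceMap^[n] (semiConj (θ, φ))).1| ≤ 1 ∧
      |(traceMap^[n] (semiConj (θ, φ))).2.1| ≤ 1 ∧
      |(traceMap^[n] (semiConj (θ, φ))).2.2| ≤ 1 := fun θ φ n => by
    rw [← (semiConj_semiconj.iterate_right n) (θ, φ)]
    exact abs_semiConj_le_one _
  refine ⟨orbit_le_one, fun θ φ => isBounded_of_forall_abs_le (C := 1) ?_⟩
  rintro _ ⟨n, rfl⟩
  exact orbit_le_one θ φ n
end

section
/- For every point p ∈ ℝ³, exactly one of the following holds: either the forward orbit {Tⁿ(p) : n ≥ 0} of p under the Fibonacci trace map is bounded, or the orbit diverges to infinity in every coordinate, i.e., the absolute value of each of the three coordinates of Tⁿ(p) tends to +∞ as n → ∞. -/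
open Filter Set

/-!
The coordinates of `traceMap^[n] p` are consecutive terms of `xₙ = (traceMap^[n] p).2.2`, which
satisfies `x (n+3) = 2 x (n+2) x (n+1) - x n` and keeps `I = x² + y² + z² - 2xyz` of consecutive
triples constant. If `|x (k+1)|, |x (k+2)| ≥ m > 1` and `|x k| ≤ |x (k+2)|`, this
configuration reproduces itself one step later with `|x (k+3)| ≥ (2m - 1) |x (k+2)|`, so
`|xₙ| → ∞`. Otherwise a term above `max |x 0| |x 1|` and `|I| + 2` is preceded by a term of size
at most `1`, and the invariance of `I` pushes the following term above `1`, creating such a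
configuration; hence the sequence is bounded.
-/

def traceInvariant (x y z : ℝ) : ℝ := x ^ 2 + y ^ 2 + z ^ 2 - 2 * x * y * z

lemma sq_abs_sub_abs_le_traceInvariant {x y z : ℝ} (hz : |z| ≤ 1) :
    (|x| - |y|) ^ 2 ≤ traceInvariant x y z := by
  have hxyz : x * y * z ≤ |x| * |y| :=
    calc x * y * z ≤ |x * y * z| := le_abs_self _
      _ = |x| * |y| * |z| := by rw [abs_mul, abs_mul]
      _ ≤ |x| * |y| := mul_le_of_le_one_right (by positivity) hz
  unfold traceInvariant
  nlinarith [sq_abs x, sq_abs y, sq_nonneg z]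

lemma one_lt_abs_of_traceInvariant_add_two_lt {x y z : ℝ} (hz : |z| ≤ 1)
    (hy : traceInvariant x y z + 2 < |y|) : 1 < |x| := by
  by_contra! hx
  nlinarith [sq_abs_sub_abs_le_traceInvariant (x := x) (y := y) hz]

def IsTraceSequence (a : ℕ → ℝ) : Prop :=
  ∀ n, a (n + 3) = 2 * a (n + 2) * a (n + 1) - a n

def EscapesAt (a : ℕ → ℝ) (m : ℝ) (k : ℕ) : Prop :=
  m ≤ |a (k + 1)| ∧ m ≤ |a (k + 2)| ∧ |a k| ≤ |a (k + 2)|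

namespace IsTraceSequence

variable {a : ℕ → ℝ}

lemma traceInvariant_eq (ha : IsTraceSequence a) (n : ℕ) :
    traceInvariant (a (n + 2)) (a (n + 1)) (a n) = traceInvariant (a 2) (a 1) (a 0) := by
  induction n with
  | zero => rfl
  | succ n ih =>
    rw [← ih]
    show traceInvariant (a (n + 3)) (a (n + 2)) (a (n + 1)) = _
    rw [ha n]
    unfold traceInvariant
    ring

lemma two_mul_abs_mul_abs_sub_abs_le (ha : IsTraceSequence a) (n : ℕ) :
    2 * |a (n + 2)| * |a (n + 1)| - |a n| ≤ |a (n + 3)| :=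
  calc 2 * |a (n + 2)| * |a (n + 1)| - |a n| = |2 * a (n + 2) * a (n + 1)| - |a n| := by
        rw [abs_mul, abs_mul, abs_two]
    _ ≤ |2 * a (n + 2) * a (n + 1) - a n| := abs_sub_abs_le_abs_sub _ _
    _ = |a (n + 3)| := by rw [ha n]

lemma escapesAt_succ (ha : IsTraceSequence a) {m : ℝ} {k : ℕ} (hm : 1 ≤ m)
    (h : EscapesAt a m k) :
    EscapesAt a m (k + 1) ∧ (2 * m - 1) * |a (k + 2)| ≤ |a (k + 3)| := by
  obtain ⟨h1, h2, h3⟩ := h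
  have hrec := ha.two_mul_abs_mul_abs_sub_abs_le k
  have growth : (2 * m - 1) * |a (k + 2)| ≤ |a (k + 3)| := by nlinarith
  exact ⟨⟨h2, by nlinarith, by nlinarith⟩, growth⟩

lemma escapesAt_add (ha : IsTraceSequence a) {m : ℝ} {k : ℕ} (hm : 1 ≤ m)
    (h : EscapesAt a m k) (j : ℕ) : EscapesAt a m (k + j) := by
  induction j with
  | zero => exact h
  | succ j ih => exact (ha.escapesAt_succ hm ih).1

lemma pow_mul_le_abs_of_escapesAt (ha : IsTraceSequence a) {m : ℝ} {k : ℕ} (hm : 1 ≤ m)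
    (h : EscapesAt a m k) (j : ℕ) : (2 * m - 1) ^ j * |a (k + 2)| ≤ |a (j + (k + 2))| := by
  induction j with
  | zero => simp
  | succ j ih =>
    have hstep := (ha.escapesAt_succ hm (ha.escapesAt_add hm h j)).2
    rw [show j + 1 + (k + 2) = k + j + 3 by omega, pow_succ']
    rw [show j + (k + 2) = k + j + 2 by omega] at ih
    nlinarith

lemma tendsto_abs_of_escapesAt (ha : IsTraceSequence a) {m : ℝ} {k : ℕ} (hm : 1 < m)
    (h : EscapesAt a m k) : Tendsto (fun n ↦ |a n|) atTop atTop := by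
  have hpow : Tendsto (fun j : ℕ ↦ (2 * m - 1) ^ j * |a (k + 2)|) atTop atTop :=
    (tendsto_pow_atTop_atTop_of_one_lt (by linarith)).atTop_mul_const (by linarith [h.2.1])
  exact (tendsto_add_atTop_iff_nat (k + 2)).mp
    (tendsto_atTop_mono (ha.pow_mul_le_abs_of_escapesAt hm.le h) hpow)

lemma tendsto_abs_of_one_lt (ha : IsTraceSequence a) {k : ℕ} (h1 : 1 < |a (k + 1)|)
    (h2 : 1 < |a (k + 2)|) (h3 : |a k| ≤ |a (k + 2)|) : Tendsto (fun n ↦ |a n|) atTop atTop :=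
  ha.tendsto_abs_of_escapesAt (lt_min h1 h2) ⟨min_le_left _ _, min_le_right _ _, h3⟩

lemma abs_le_of_not_tendsto (ha : IsTraceSequence a)
    (h : ¬Tendsto (fun n ↦ |a n|) atTop atTop) (n : ℕ) :
    |a n| ≤ max (max |a 0| |a 1|) (|traceInvariant (a 2) (a 1) (a 0)| + 2) := by
  set C := max (max |a 0| |a 1|) (|traceInvariant (a 2) (a 1) (a 0)| + 2)
  induction n using Nat.strong_induction_on with
  | _ n ih =>
    match n, ih with
    | 0, _ => exact (le_max_left _ _).trans (le_max_left _ _)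
    | 1, _ => exact (le_max_right _ _).trans (le_max_left _ _)
    | k + 2, ih =>
      by_contra! hk
      have hJ : |traceInvariant (a 2) (a 1) (a 0)| + 2 < |a (k + 2)| :=
        (le_max_right _ _).trans_lt hk
      have h2 : 1 < |a (k + 2)| := by linarith [abs_nonneg (traceInvariant (a 2) (a 1) (a 0))]
      have h0 : |a k| ≤ |a (k + 2)| := (ih k (by omega)).trans hk.le
      have h1 : |a (k + 1)| ≤ 1 := by
        by_contra! h1
        exact h (ha.tendsto_abs_of_one_lt h1 h2 h0)
      have h3 : 1 < |a (k + 3)| := by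
        refine one_lt_abs_of_traceInvariant_add_two_lt (y := a (k + 2)) h1 ?_
        rw [ha.traceInvariant_eq (k + 1)]
        linarith [le_abs_self (traceInvariant (a 2) (a 1) (a 0))]
      exact h (ha.tendsto_abs_of_one_lt h2 h3 (by linarith))

lemma bddAbove_range_abs_iff_not_tendsto (ha : IsTraceSequence a) :
    BddAbove (range fun n ↦ |a n|) ↔ ¬Tendsto (fun n ↦ |a n|) atTop atTop :=
  ⟨fun hb ht ↦ not_bddAbove_of_tendsto_atTop ht hb,
    fun ht ↦ ⟨_, forall_mem_range.2 (ha.abs_le_of_not_tendsto ht)⟩⟩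

end IsTraceSequence

noncomputable def traceSeq (p : ℝ × ℝ × ℝ) (n : ℕ) : ℝ := (traceMap^[n] p).2.2

lemma iterate_traceMap (p : ℝ × ℝ × ℝ) (n : ℕ) :
    traceMap^[n] p = (traceSeq p (n + 2), traceSeq p (n + 1), traceSeq p n) := by
  simp only [traceSeq, Function.iterate_succ_apply', traceMap]

lemma isTraceSequence_traceSeq (p : ℝ × ℝ × ℝ) : IsTraceSequence (traceSeq p) := by
  intro n
  simp only [traceSeq, Function.iterate_succ_apply', traceMap]

lemma isBounded_range_iterate_traceMap_iff (p : ℝ × ℝ × ℝ) :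
    Bornology.IsBounded (range fun n : ℕ ↦ traceMap^[n] p) ↔
      BddAbove (range fun n ↦ |traceSeq p n|) := by
  simp only [isBounded_iff_forall_norm_le, bddAbove_def, forall_mem_range, iterate_traceMap,
    Prod.norm_mk, Real.norm_eq_abs, max_le_iff]
  exact ⟨fun ⟨C, h⟩ ↦ ⟨C, fun n ↦ (h n).2.2⟩,
    fun ⟨C, h⟩ ↦ ⟨C, fun n ↦ ⟨h _, h _, h _⟩⟩⟩

theorem bounded_or_superexponential_escape (p : ℝ × ℝ × ℝ) :
    Xor'
      (Bornology.IsBounded (Set.range fun n : ℕ => traceMap^[n] p))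
      (Tendsto (fun n : ℕ => |(traceMap^[n] p).1|) atTop atTop ∧
       Tendsto (fun n : ℕ => |(traceMap^[n] p).2.1|) atTop atTop ∧
       Tendsto (fun n : ℕ => |(traceMap^[n] p).2.2|) atTop atTop) := by
  refine xor_iff_iff_not.2 ?_
  rw [isBounded_range_iterate_traceMap_iff]
  simp only [iterate_traceMap]
  rw [tendsto_add_atTop_iff_nat (f := fun n ↦ |traceSeq p n|) 2,
    tendsto_add_atTop_iff_nat (f := fun n ↦ |traceSeq p n|) 1, and_self, and_self]
  exact (isTraceSequence_traceSeq p).bddAbove_range_abs_iff_not_tendsto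
end

section
/- Sufficient condition for escape: if (x,y,z) ∈ ℝ³ satisfies |x| > 1, |y| > 1 and |xy| ≥ |z|, then the forward orbit {Tⁿ(x,y,z) : n ≥ 0} under the Fibonacci trace map is unbounded. Consequently, by the reversing symmetry s(x,y,z) = (z,y,x) of T, if |y| > 1, |z| > 1 and |yz| ≥ |x|, then the backward orbit {T⁻ⁿ(x,y,z) : n ≥ 0} is unbounded. -/
/-- The inverse of the Fibonacci trace map. -/
noncomputable def traceMapInv : ℝ × ℝ × ℝ → ℝ × ℝ × ℝ :=
  fun p => (p.2.1, p.2.2, 2 * p.2.1 * p.2.2 - p.1)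

def escapeRegion (c : ℝ) : Set (ℝ × ℝ × ℝ) :=
  {q | c ≤ |q.1| ∧ c ≤ |q.2.1| ∧ |q.2.2| ≤ |q.1 * q.2.1|}

lemma abs_mul_le_abs_traceMap_fst {q : ℝ × ℝ × ℝ} (h : |q.2.2| ≤ |q.1 * q.2.1|) :
    |q.1 * q.2.1| ≤ |(traceMap q).1| := by
  have h2 : |2 * q.1 * q.2.1| = 2 * |q.1 * q.2.1| := by
    rw [mul_assoc, abs_mul, abs_two]
  have := abs_sub_abs_le_abs_sub (2 * q.1 * q.2.1) q.2.2
  simp only [traceMap]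
  linarith

lemma mul_abs_fst_le_abs_traceMap_fst {c : ℝ} {q : ℝ × ℝ × ℝ} (hq : q ∈ escapeRegion c) :
    c * |q.1| ≤ |(traceMap q).1| :=
  calc c * |q.1| ≤ |q.2.1| * |q.1| := mul_le_mul_of_nonneg_right hq.2.1 (abs_nonneg _)
    _ = |q.1 * q.2.1| := by rw [abs_mul, mul_comm]
    _ ≤ |(traceMap q).1| := abs_mul_le_abs_traceMap_fst hq.2.2

lemma mapsTo_traceMap_escapeRegion {c : ℝ} (hc : 1 ≤ c) :
    Set.MapsTo traceMap (escapeRegion c) (escapeRegion c) := by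
  rintro q hq
  have hx : 1 ≤ |q.1| := hc.trans hq.1
  have hx' : c * |q.1| ≤ |(traceMap q).1| := mul_abs_fst_le_abs_traceMap_fst hq
  refine ⟨(le_mul_of_one_le_right (by linarith) hx).trans hx', hq.1, ?_⟩
  calc |(traceMap q).2.2| = |q.2.1| := rfl
    _ ≤ |q.2.1| * (|q.1| * |q.1|) :=
        le_mul_of_one_le_right (abs_nonneg _) (one_le_mul_of_one_le_of_one_le hx hx)
    _ = |q.2.1| * |q.1| * |q.1| := (mul_assoc _ _ _).symm
    _ ≤ |(traceMap q).1| * |q.1| := by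
        gcongr
        simpa [abs_mul, mul_comm] using abs_mul_le_abs_traceMap_fst hq.2.2
    _ = |(traceMap q).1 * (traceMap q).2.1| := (abs_mul _ _).symm

lemma pow_mul_abs_fst_le_abs_iterate_traceMap_fst {c : ℝ} (hc : 1 ≤ c) {q : ℝ × ℝ × ℝ}
    (hq : q ∈ escapeRegion c) (n : ℕ) : c ^ n * |q.1| ≤ |(traceMap^[n] q).1| := by
  induction n with
  | zero => simp
  | succ n ih =>
    rw [Function.iterate_succ_apply', pow_succ', mul_assoc]
    calc c * (c ^ n * |q.1|) ≤ c * |(traceMap^[n] q).1| := by gcongr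
      _ ≤ |(traceMap (traceMap^[n] q)).1| :=
        mul_abs_fst_le_abs_traceMap_fst ((mapsTo_traceMap_escapeRegion hc).iterate n hq)

lemma not_isBounded_range_of_pow_le_abs_fst {E : Type*} [SeminormedAddCommGroup E] {c : ℝ}
    (hc : 1 < c) {f : ℕ → ℝ × E} (hf : ∀ n, c ^ n ≤ |(f n).1|) :
    ¬ Bornology.IsBounded (Set.range f) := by
  intro hb
  obtain ⟨M, hM⟩ := hb.exists_norm_le
  obtain ⟨n, hn⟩ := pow_unbounded_of_one_lt M hc
  have := (hf n).trans ((norm_fst_le (f n)).trans (hM _ ⟨n, rfl⟩))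
  exact hn.not_ge this

theorem not_isBounded_range_iterate_traceMap {p : ℝ × ℝ × ℝ} (hx : 1 < |p.1|)
    (hy : 1 < |p.2.1|) (hz : |p.2.2| ≤ |p.1 * p.2.1|) :
    ¬ Bornology.IsBounded (Set.range fun n : ℕ => traceMap^[n] p) := by
  have hc : 1 < min |p.1| |p.2.1| := lt_min hx hy
  have hp : p ∈ escapeRegion (min |p.1| |p.2.1|) := ⟨min_le_left _ _, min_le_right _ _, hz⟩
  refine not_isBounded_range_of_pow_le_abs_fst hc fun n => ?_
  exact (le_mul_of_one_le_right (by positivity) hx.le).trans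
    (pow_mul_abs_fst_le_abs_iterate_traceMap_fst hc.le hp n)

def reverseTriple (q : ℝ × ℝ × ℝ) : ℝ × ℝ × ℝ := (q.2.2, q.2.1, q.1)

lemma isometry_reverseTriple : Isometry reverseTriple :=
  Isometry.of_dist_eq fun q r => by
    simp only [reverseTriple, Prod.dist_eq, max_comm, max_left_comm]

lemma semiconj_reverseTriple_traceMapInv :
    Function.Semiconj reverseTriple traceMapInv traceMap := fun q => by
  simp [reverseTriple, traceMapInv, traceMap, mul_right_comm]

theorem not_isBounded_range_iterate_traceMapInv {p : ℝ × ℝ × ℝ} (hy : 1 < |p.2.1|)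
    (hz : 1 < |p.2.2|) (hx : |p.1| ≤ |p.2.1 * p.2.2|) :
    ¬ Bornology.IsBounded (Set.range fun n : ℕ => traceMapInv^[n] p) := by
  intro hb
  have hrange : (Set.range fun n : ℕ => traceMap^[n] (reverseTriple p)) =
      reverseTriple '' Set.range fun n : ℕ => traceMapInv^[n] p := by
    rw [← Set.range_comp]
    exact congrArg Set.range
      (funext fun n => (semiconj_reverseTriple_traceMapInv.iterate_right n p).symm)
  refine not_isBounded_range_iterate_traceMap (p := reverseTriple p) hz hy
    (by simpa [reverseTriple, mul_comm] using hx) ?_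
  rw [hrange]
  exact isometry_reverseTriple.lipschitz.isBounded_image hb

theorem sufficient_condition_for_escape :
    (∀ p : ℝ × ℝ × ℝ, 1 < |p.1| → 1 < |p.2.1| → |p.2.2| ≤ |p.1 * p.2.1| →
      ¬ Bornology.IsBounded (Set.range fun n : ℕ => traceMap^[n] p)) ∧
    (∀ p : ℝ × ℝ × ℝ, 1 < |p.2.1| → 1 < |p.2.2| → |p.1| ≤ |p.2.1 * p.2.2| →
      ¬ Bornology.IsBounded (Set.range fun n : ℕ => traceMapInv^[n] p)) :=
  ⟨fun _ => not_isBounded_range_iterate_traceMap, fun _ => not_isBounded_range_iterate_traceMapInv⟩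
end

section
/- Band spectrum approximation (pointwise form): let C > 1 and let p = (p_x, p_y, p_z) ∈ ℝ³ satisfy I(p) ≥ 0 and |p_z| < C. For n ≥ 1 say that p lies in the band set σₙ if the third coordinate of Tⁿ(p) has absolute value at most C. Then p has bounded forward orbit under T if and only if for every n ≥ 1, p lies in σₙ or in σₙ₊₁. -/
/-- The Fricke–Vogt invariant. -/
noncomputable def frickeVogt : ℝ × ℝ × ℝ → ℝ :=
  fun p => p.1 ^ 2 + p.2.1 ^ 2 + p.2.2 ^ 2 - 2 * p.1 * p.2.1 * p.2.2 - 1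

/-!
Write `xₙ` for the third coordinate of `Tⁿ(p)`, so that `Tⁿ(p) = (xₙ₊₂, xₙ₊₁, xₙ)`,
`xₙ₊₃ = 2 xₙ₊₂ xₙ₊₁ - xₙ`, and `I` is constant along the orbit.

If the band condition fails, take the first pair of consecutive terms larger than `C` in absolute
value; since `|x₀| < C`, it is preceded by a term of size at most `C`. From such a configuration
the recurrence gives `|xₖ₊₃| ≥ (2C - 1)|xₖ₊₂| ≥ C |xₖ₊₂|` and the configuration moves one step
forward, so the orbit grows geometrically.

Conversely, under the band condition a term `y` with `|y| > C` has both neighbours bounded by `C`,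
and the invariant `x² + y² + z² - 2xyz - 1 = I(p)` then gives `|y|² ≤ |I(p) + 1| + 2C²|y|`.
-/

open Function Set

noncomputable def traceOrbit (p : ℝ × ℝ × ℝ) (n : ℕ) : ℝ :=
  (traceMap^[n] p).2.2

lemma frickeVogt_traceMap (q : ℝ × ℝ × ℝ) : frickeVogt (traceMap q) = frickeVogt q := by
  simp only [traceMap, frickeVogt]
  ring

lemma frickeVogt_iterate_traceMap (p : ℝ × ℝ × ℝ) (n : ℕ) :
    frickeVogt (traceMap^[n] p) = frickeVogt p := by
  induction n with
  | zero => rfl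
  | succ n ih => rw [iterate_succ_apply', frickeVogt_traceMap, ih]

lemma traceMap_iterate_eq (p : ℝ × ℝ × ℝ) (n : ℕ) :
    traceMap^[n] p = (traceOrbit p (n + 2), traceOrbit p (n + 1), traceOrbit p n) := by
  simp only [traceOrbit, iterate_succ_apply', traceMap]

lemma traceOrbit_add_three (p : ℝ × ℝ × ℝ) (n : ℕ) :
    traceOrbit p (n + 3) = 2 * traceOrbit p (n + 2) * traceOrbit p (n + 1) - traceOrbit p n := by
  have h := traceMap_iterate_eq p (n + 1)
  rw [iterate_succ_apply', traceMap_iterate_eq p n] at h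
  exact (congrArg Prod.fst h).symm

lemma isBounded_range_traceMap_iterate_iff (p : ℝ × ℝ × ℝ) :
    Bornology.IsBounded (range fun n : ℕ => traceMap^[n] p) ↔
      ∃ B, ∀ n, |traceOrbit p n| ≤ B := by
  simp only [isBounded_iff_forall_norm_le, forall_mem_range, traceMap_iterate_eq,
    Prod.norm_def, Real.norm_eq_abs, max_le_iff]
  exact exists_congr fun B => ⟨fun h n => (h n).2.2, fun h n => ⟨h _, h _, h _⟩⟩

lemma abs_snd_fst_le_of_frickeVogt (q : ℝ × ℝ × ℝ) {C : ℝ} (h₁ : |q.1| ≤ C) (h₃ : |q.2.2| ≤ C)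
    (h₂ : 1 ≤ |q.2.1|) : |q.2.1| ≤ |frickeVogt q + 1| + 2 * C ^ 2 := by
  obtain ⟨a, b, c⟩ := q
  have hC : 0 ≤ C := (abs_nonneg a).trans h₁
  have hprod : 2 * a * b * c ≤ 2 * C ^ 2 * |b| := by
    calc 2 * a * b * c ≤ |2 * a * b * c| := le_abs_self _
      _ = 2 * |b| * (|a| * |c|) := by rw [abs_mul, abs_mul, abs_mul, abs_two]; ring
      _ ≤ 2 * |b| * (C * C) := by gcongr
      _ = 2 * C ^ 2 * |b| := by ring
  have hF : frickeVogt (a, b, c) + 1 = a ^ 2 + b ^ 2 + c ^ 2 - 2 * a * b * c := by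
    simp only [frickeVogt]; ring
  have hsq : |b| * |b| ≤ (|frickeVogt (a, b, c) + 1| + 2 * C ^ 2) * |b| := by
    nlinarith [abs_mul_abs_self b, sq_nonneg a, sq_nonneg c, le_abs_self (frickeVogt (a, b, c) + 1),
      mul_nonneg (abs_nonneg (frickeVogt (a, b, c) + 1)) (sub_nonneg.2 h₂)]
  exact le_of_mul_le_mul_right hsq (by linarith)

section Recurrence

variable {x : ℕ → ℝ} {C : ℝ}

def IsEscaping (x : ℕ → ℝ) (C : ℝ) (k : ℕ) : Prop :=
  C < |x (k + 1)| ∧ C < |x (k + 2)| ∧ |x k| ≤ |x (k + 2)|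

lemma IsEscaping.succ (hrec : ∀ m, x (m + 3) = 2 * x (m + 2) * x (m + 1) - x m) (hC : 1 < C)
    {k : ℕ} (h : IsEscaping x C k) : IsEscaping x C (k + 1) ∧ C * |x (k + 2)| ≤ |x (k + 3)| := by
  obtain ⟨h₁, h₂, h₀⟩ := h
  have hlow : 2 * |x (k + 2)| * |x (k + 1)| - |x k| ≤ |x (k + 3)| := by
    have := abs_sub_abs_le_abs_sub (2 * x (k + 2) * x (k + 1)) (x k)
    rwa [abs_mul, abs_mul, abs_two, ← hrec] at this
  refine ⟨⟨h₂, ?_, ?_⟩, ?_⟩ <;> nlinarith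

lemma IsEscaping.pow_mul_le (hrec : ∀ m, x (m + 3) = 2 * x (m + 2) * x (m + 1) - x m)
    (hC : 1 < C) {k : ℕ} (h : IsEscaping x C k) (j : ℕ) :
    IsEscaping x C (k + j) ∧ C ^ j * |x (k + 2)| ≤ |x (k + 2 + j)| := by
  induction j with
  | zero => simpa using h
  | succ j ih =>
    obtain ⟨hesc, hj⟩ := ih
    obtain ⟨hesc', hstep⟩ := hesc.succ hrec hC
    refine ⟨hesc', ?_⟩
    calc C ^ (j + 1) * |x (k + 2)| = C * (C ^ j * |x (k + 2)|) := by ring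
      _ ≤ C * |x (k + 2 + j)| := by gcongr
      _ ≤ |x (k + 2 + (j + 1))| := by
        rwa [show k + 2 + j = k + j + 2 by ring, show k + 2 + (j + 1) = k + j + 3 by ring]

lemma IsEscaping.not_bounded (hrec : ∀ m, x (m + 3) = 2 * x (m + 2) * x (m + 1) - x m)
    (hC : 1 < C) {k : ℕ} (h : IsEscaping x C k) : ¬ ∃ B, ∀ n, |x n| ≤ B := by
  rintro ⟨B, hB⟩
  obtain ⟨j, hj⟩ := pow_unbounded_of_one_lt B hC
  have hgrowth := (h.pow_mul_le hrec hC j).2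
  have hx : 1 ≤ |x (k + 2)| := by linarith [h.2.1]
  nlinarith [hB (k + 2 + j), pow_pos (zero_lt_one.trans hC) j]

lemma exists_isEscaping (h₀ : |x 0| ≤ C) (h : ∃ n, C < |x n| ∧ C < |x (n + 1)|) :
    ∃ k, IsEscaping x C k := by
  obtain ⟨hlarge, hlarge'⟩ := Nat.find_spec h
  obtain ⟨m, hm⟩ : ∃ m, Nat.find h = m + 1 :=
    Nat.exists_eq_succ_of_ne_zero fun h0 => (h0 ▸ hlarge).not_ge h₀
  rw [hm] at hlarge hlarge'
  have hsmall : |x m| ≤ C := not_lt.1 fun hm' => Nat.find_min h (by omega) ⟨hm', hlarge⟩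
  exact ⟨m, hlarge, hlarge', hsmall.trans hlarge'.le⟩

lemma abs_adjacent_le_of_bands (h₀ : |x 0| ≤ C)
    (hband : ∀ n, 1 ≤ n → |x n| ≤ C ∨ |x (n + 1)| ≤ C) {k : ℕ} (hk : C < |x (k + 1)|) :
    |x k| ≤ C ∧ |x (k + 2)| ≤ C := by
  refine ⟨?_, (hband (k + 1) (by omega)).resolve_left hk.not_ge⟩
  rcases k with _ | j
  · exact h₀
  · exact (hband (j + 1) (by omega)).resolve_right hk.not_ge

end Recurrence

lemma abs_traceOrbit_le_of_bands {C : ℝ} (hC : 1 < C) {p : ℝ × ℝ × ℝ} (hz : |p.2.2| ≤ C)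
    (hband : ∀ n, 1 ≤ n → |traceOrbit p n| ≤ C ∨ |traceOrbit p (n + 1)| ≤ C) (n : ℕ) :
    |traceOrbit p n| ≤ max C (|frickeVogt p + 1| + 2 * C ^ 2) := by
  rcases n with _ | k
  · exact le_max_of_le_left hz
  rcases le_or_gt |traceOrbit p (k + 1)| C with hsmall | hlarge
  · exact le_max_of_le_left hsmall
  obtain ⟨h₀, h₂⟩ := abs_adjacent_le_of_bands hz hband hlarge
  have hbound := abs_snd_fst_le_of_frickeVogt (traceMap^[k] p) (C := C)
  rw [frickeVogt_iterate_traceMap, traceMap_iterate_eq] at hbound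
  exact le_max_of_le_right (hbound h₂ h₀ (by linarith))

theorem band_spectrum_approximation_general
    (C : ℝ) (hC : 1 < C) (p : ℝ × ℝ × ℝ)
    (hz : |p.2.2| < C) :
    Bornology.IsBounded (Set.range fun n : ℕ => traceMap^[n] p) ↔
      ∀ n : ℕ, 1 ≤ n →
        (|(traceMap^[n] p).2.2| ≤ C ∨ |(traceMap^[n + 1] p).2.2| ≤ C) := by
  rw [isBounded_range_traceMap_iterate_iff]
  constructor
  · intro hbdd n _
    by_contra! hescape
    obtain ⟨k, hk⟩ := exists_isEscaping (x := traceOrbit p) hz.le ⟨n, hescape⟩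
    exact hk.not_bounded (traceOrbit_add_three p) hC hbdd
  · exact fun hband => ⟨_, abs_traceOrbit_le_of_bands hC hz.le hband⟩

theorem band_spectrum_approximation
    (C : ℝ) (hC : 1 < C) (p : ℝ × ℝ × ℝ) (hI : 0 ≤ frickeVogt p)
    (hz : |p.2.2| < C) :
    Bornology.IsBounded (Set.range fun n : ℕ => traceMap^[n] p) ↔
      ∀ n : ℕ, 1 ≤ n →
        (|(traceMap^[n] p).2.2| ≤ C ∨ |(traceMap^[n + 1] p).2.2| ≤ C) :=
  band_spectrum_approximation_general C hC p hz
end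

section
/- Sign of the invariant at w = 1: let α, β be complex numbers in the open unit disk, set ρ = √(1−|α|²), σ = √(1−|β|²), K = 2(1 − Re(ᾱβ)), and let I(1) = 1/ρ² + 1/σ² + (K² − 4K)/(4ρ²σ²) − 1 (the value of the Fricke–Vogt invariant on the curve of initial conditions at the spectral parameter w = 1). Then I(1) < 0 if and only if |Re(ᾱβ)| < |α|·|β|. -/
/-!
Writing `a = ‖α‖`, `b = ‖β‖`, `r = Re(ᾱβ)`, we have `ρ² = 1 - a²`, `σ² = 1 - b²` and
`(K² - 4K)/4 = r² - 1`, so the invariant at `w = 1` collapses to `(r² - a²b²) / (ρ²σ²)`.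
The denominator is positive inside the disk, so the sign is that of `r² - (ab)²`.
-/

lemma sq_sqrt_one_sub_sq_norm {E : Type*} [SeminormedAddGroup E] {x : E} (hx : ‖x‖ < 1) :
    Real.sqrt (1 - ‖x‖ ^ 2) ^ 2 = 1 - ‖x‖ ^ 2 :=
  Real.sq_sqrt (sub_pos.2 (pow_lt_one₀ (norm_nonneg x) hx two_ne_zero)).le

lemma invariant_at_one_eq {ρ σ K a b r : ℝ}
    (hρ : ρ ^ 2 = 1 - a ^ 2) (hσ : σ ^ 2 = 1 - b ^ 2) (hK : K = 2 * (1 - r))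
    (hρ0 : ρ ≠ 0) (hσ0 : σ ≠ 0) :
    1 / ρ ^ 2 + 1 / σ ^ 2 + (K ^ 2 - 4 * K) / (4 * ρ ^ 2 * σ ^ 2) - 1 =
      (r ^ 2 - (a * b) ^ 2) / (ρ ^ 2 * σ ^ 2) := by
  have ha : 1 - a ^ 2 ≠ 0 := hρ ▸ pow_ne_zero 2 hρ0
  have hb : 1 - b ^ 2 ≠ 0 := hσ ▸ pow_ne_zero 2 hσ0
  rw [hρ, hσ, hK]
  field_simp
  ring

lemma div_neg_iff_abs_lt {r c d : ℝ} (hc : 0 ≤ c) (hd : 0 < d) :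
    (r ^ 2 - c ^ 2) / d < 0 ↔ |r| < c := by
  rw [div_lt_iff₀ hd, zero_mul, sub_neg, sq_lt_sq, abs_of_nonneg hc]

theorem invariant_at_one_negative_iff
    (α β : ℂ) (hα : ‖α‖ < 1) (hβ : ‖β‖ < 1)
    (ρ σ K : ℝ)
    (hρ : ρ = Real.sqrt (1 - ‖α‖ ^ 2))
    (hσ : σ = Real.sqrt (1 - ‖β‖ ^ 2))
    (hK : K = 2 * (1 - ((starRingEnd ℂ) α * β).re)) :
    1 / ρ ^ 2 + 1 / σ ^ 2 + (K ^ 2 - 4 * K) / (4 * ρ ^ 2 * σ ^ 2) - 1 < 0 ↔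
      |((starRingEnd ℂ) α * β).re| < ‖α‖ * ‖β‖ := by
  have hρ2 : ρ ^ 2 = 1 - ‖α‖ ^ 2 := hρ ▸ sq_sqrt_one_sub_sq_norm hα
  have hσ2 : σ ^ 2 = 1 - ‖β‖ ^ 2 := hσ ▸ sq_sqrt_one_sub_sq_norm hβ
  have hρ0 : ρ ≠ 0 := by
    rintro rfl
    nlinarith [norm_nonneg α]
  have hσ0 : σ ≠ 0 := by
    rintro rfl
    nlinarith [norm_nonneg β]
  rw [invariant_at_one_eq hρ2 hσ2 hK hρ0 hσ0]
  exact div_neg_iff_abs_lt (by positivity) (by positivity)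
end

section
/- Trace bound forces growth of orbits of vectors: let A be a 2×2 complex matrix with |det A| = 1, let C ≥ 1 satisfy |tr A| ≤ C, and let v ∈ ℂ². Then max(‖A v‖, ‖A² v‖) ≥ ‖v‖ / (2C). -/
/-!
By Cayley–Hamilton, `(det A) v = (tr A) (A v) - A² v`. Taking norms, `|det A| = 1` and
`|tr A| ≤ C` give `‖v‖ ≤ C ‖A v‖ + ‖A² v‖ ≤ (C + 1) max(‖A v‖, ‖A² v‖)`, and `C + 1 ≤ 2C`.
-/

open Polynomial in
theorem Matrix.mul_self_eq_of_card_eq_two {n R : Type*} [Fintype n] [DecidableEq n]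
    [CommRing R] [Nontrivial R] (A : Matrix n n R) (hn : Fintype.card n = 2) :
    A * A = A.trace • A - A.det • 1 := by
  have h := A.aeval_self_charpoly
  rw [A.charpoly_of_card_eq_two hn] at h
  simp only [map_add, map_sub, map_mul, map_pow, aeval_X, aeval_C,
    Algebra.algebraMap_eq_smul_one, smul_mul_assoc, one_mul] at h
  rw [← sub_eq_zero, ← h, sq]
  abel

theorem norm_div_le_max_of_smul_eq_sub {𝕜 E : Type*} [NormedField 𝕜]
    [SeminormedAddCommGroup E] [NormedSpace 𝕜 E] {d t : 𝕜} {C : ℝ} {v a b : E}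
    (hd : ‖d‖ = 1) (hC : 1 ≤ C) (ht : ‖t‖ ≤ C) (h : d • v = t • a - b) :
    ‖v‖ / (2 * C) ≤ max ‖a‖ ‖b‖ := by
  have hv : ‖v‖ ≤ C * ‖a‖ + ‖b‖ :=
    calc ‖v‖ = ‖t • a - b‖ := by rw [← h, norm_smul, hd, one_mul]
      _ ≤ ‖t‖ * ‖a‖ + ‖b‖ := (norm_sub_le _ _).trans_eq (by rw [norm_smul])
      _ ≤ C * ‖a‖ + ‖b‖ := by gcongr
  have ha := le_max_left ‖a‖ ‖b‖
  have hb := le_max_right ‖a‖ ‖b‖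
  rw [div_le_iff₀ (by linarith)]
  nlinarith [norm_nonneg a]

theorem trace_bound_forces_growth
    (A : Matrix (Fin 2) (Fin 2) ℂ) (hdet : ‖A.det‖ = 1)
    (C : ℝ) (hC : 1 ≤ C) (htr : ‖A.trace‖ ≤ C)
    (v : EuclideanSpace ℂ (Fin 2)) :
    ‖v‖ / (2 * C) ≤
      max ‖Matrix.toEuclideanLin A v‖ ‖Matrix.toEuclideanLin (A * A) v‖ := by
  refine norm_div_le_max_of_smul_eq_sub hdet hC htr ?_
  rw [A.mul_self_eq_of_card_eq_two (Fintype.card_fin 2)]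
  simp only [map_sub, map_smul, LinearMap.sub_apply, LinearMap.smul_apply]
  simp [Matrix.toEuclideanLin]
end
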